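/- Let q ≥ 1 be an integer, let a < b be real numbers, set τ = b − a, let λ > 0 and θ ∈ ℝ, define φ(t) = θ − λ(t − a), and let L be the shifted Legendre polynomial of degree q on (a, b). Let H be a real inner product space, let v be an H-valued polynomial of degree at most q with coefficientwise derivative v', and let g be an L²(a, b)-orthogonal projection of the function t ↦ φ(t)·v'(t) onto H-valued polynomials of degree at most q − 1. Then ∫_a^b ⟨v(t), φ(t)v'(t) − g(t)⟩_H dt = −(λ·q·(2q + 1)/τ) · ‖∫_a^b L(t) v(t) dt‖_H²; in particular, this integral is nonpositive. -/

import Mathlib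

open MeasureTheory

/-- An `H`-valued polynomial of degree at most `k`: a function of the form
`t ↦ ∑_{i=0}^{k} t^i • cᵢ` with coefficients `cᵢ ∈ H`. -/
def IsPolyDeg {H : Type*} [NormedAddCommGroup H] [InnerProductSpace ℝ H]
    (k : ℕ) (v : ℝ → H) : Prop :=
  ∃ c : ℕ → H, ∀ t : ℝ, v t = ∑ i ∈ Finset.range (k + 1), t ^ i • c i

/-- `g` is an `L²(a, b)`-orthogonal projection of `f` onto `H`-valued polynomials of
degree at most `k`. -/
def IsL2ProjOn {H : Type*} [NormedAddCommGroup H] [InnerProductSpace ℝ H]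
    (a b : ℝ) (k : ℕ) (f g : ℝ → H) : Prop :=
  IsPolyDeg k g ∧
    ∀ r : ℝ → H, IsPolyDeg k r →
      ∫ t in Set.Ioo a b, (inner ℝ (f t - g t) (r t) : ℝ) = 0

/-!
Write `q = k + 1`. Integrating `((t - a) L²)'` over `(a, b)` and using that `(t - a) L' - q L` has
degree `< q`, hence is orthogonal to `L`, gives `∫ L² = τ / (2q + 1)`; in particular the leading
coefficient of `L` is nonzero, so `v = L • w + u` with `w ∈ H` and `deg u < q`. By Euler's identity
`t v' - q v` has degree `< q`, so the residual `r = φ v' - g` differs from `-λ q v` by a polynomial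
of degree `< q`. As `r` and `L` are both orthogonal to degree `< q`,
`∫ ⟪v, r⟫ = ⟪w, ∫ L r⟫ = -λ q ⟪w, ∫ L v⟫` and `∫ L v = (∫ L²) • w`, which gives the formula.
-/

open Polynomial Set

theorem Continuous.integrableOn_Ioo {E : Type*} [NormedAddCommGroup E] {f : ℝ → E}
    (hf : Continuous f) {a b : ℝ} : IntegrableOn f (Ioo a b) :=
  hf.integrableOn_Ioc.mono_set Ioo_subset_Ioc_self

section PolyDeg

variable {H : Type*} [NormedAddCommGroup H] [InnerProductSpace ℝ H] {k : ℕ} {u v v' : ℝ → H}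

theorem IsPolyDeg.sub (hu : IsPolyDeg k u) (hv : IsPolyDeg k v) : IsPolyDeg k (u - v) := by
  obtain ⟨c, hc⟩ := hu
  obtain ⟨d, hd⟩ := hv
  exact ⟨c - d, fun t => by simp [hc, hd, smul_sub, Finset.sum_sub_distrib]⟩

theorem IsPolyDeg.const_smul (r : ℝ) (hu : IsPolyDeg k u) : IsPolyDeg k (r • u) := by
  obtain ⟨c, hc⟩ := hu
  exact ⟨r • c, fun t => by simp [hc, Finset.smul_sum, smul_comm r]⟩

theorem IsPolyDeg.continuous (hu : IsPolyDeg k u) : Continuous u := by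
  obtain ⟨c, hc⟩ := hu
  rw [funext hc]
  fun_prop

theorem isPolyDeg_of_coeff_eq_zero {c : ℕ → H} (hc : c (k + 1) = 0) :
    IsPolyDeg k (fun t => ∑ i ∈ Finset.range (k + 2), t ^ i • c i) :=
  ⟨c, fun t => by simp only [Finset.sum_range_succ _ (k + 1), hc, smul_zero, add_zero]⟩

theorem eval_smul_eq_sum {p : ℝ[X]} {n : ℕ} (hp : p.natDegree < n) (t : ℝ) (w : H) :
    p.eval t • w = ∑ i ∈ Finset.range n, t ^ i • p.coeff i • w := by
  simp_rw [eval_eq_sum_range' hp, Finset.sum_smul, smul_smul, mul_comm]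

theorem isPolyDeg_eval_smul {p : ℝ[X]} (hp : p.natDegree ≤ k) (w : H) :
    IsPolyDeg k (fun t => p.eval t • w) :=
  ⟨fun i => p.coeff i • w, fun t => eval_smul_eq_sum (Nat.lt_succ_of_le hp) t w⟩

theorem IsPolyDeg.exists_sub_eval_smul (hv : IsPolyDeg (k + 1) v) {p : ℝ[X]}
    (hp : p.natDegree ≤ k + 1) (hpk : p.coeff (k + 1) ≠ 0) :
    ∃ w : H, IsPolyDeg k (fun t => v t - p.eval t • w) := by
  obtain ⟨c, hc⟩ := hv
  refine ⟨(p.coeff (k + 1))⁻¹ • c (k + 1), ?_⟩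
  convert isPolyDeg_of_coeff_eq_zero (k := k)
    (c := fun i => c i - p.coeff i • (p.coeff (k + 1))⁻¹ • c (k + 1))
    (by simp [smul_smul, hpk]) using 2 with t
  rw [hc, eval_smul_eq_sum (n := k + 2) (by omega), ← Finset.sum_sub_distrib]
  simp_rw [smul_sub]

theorem IsPolyDeg.continuous_of_sub_eval_smul {p : ℝ[X]} {w : H}
    (hvw : IsPolyDeg k (fun t => v t - p.eval t • w)) : Continuous v :=
  (hvw.continuous.add (by fun_prop : Continuous fun t => p.eval t • w)).congr
    fun t => sub_add_cancel _ _

theorem isPolyDeg_of_eq_sum_derivative {c : ℕ → H}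
    (hv' : ∀ t, v' t = ∑ i ∈ Finset.range (k + 2), ((i : ℝ) * t ^ (i - 1)) • c i) :
    IsPolyDeg k v' :=
  ⟨fun i => ((i : ℝ) + 1) • c (i + 1), fun t => by
    simp [hv', Finset.sum_range_succ' _ (k + 1), smul_smul, mul_comm]⟩

theorem isPolyDeg_smul_derivative_sub_smul {c : ℕ → H}
    (hv : ∀ t, v t = ∑ i ∈ Finset.range (k + 2), t ^ i • c i)
    (hv' : ∀ t, v' t = ∑ i ∈ Finset.range (k + 2), ((i : ℝ) * t ^ (i - 1)) • c i) :
    IsPolyDeg k (fun t => t • v' t - ((k + 1 : ℕ) : ℝ) • v t) := by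
  convert isPolyDeg_of_coeff_eq_zero (k := k) (c := fun i => ((i : ℝ) - (k + 1 : ℕ)) • c i)
    (by simp) using 2 with t
  simp_rw [hv, hv', Finset.smul_sum, ← Finset.sum_sub_distrib, smul_smul, ← sub_smul]
  refine Finset.sum_congr rfl fun i _ => ?_
  congr 1
  rcases i with _ | i
  · simp
  · rw [Nat.add_sub_cancel, pow_succ]; push_cast; ring

end PolyDeg

theorem integral_Ioo_eval_derivative {a b : ℝ} (hab : a ≤ b) (p : ℝ[X]) :
    ∫ t in Ioo a b, (derivative p).eval t = p.eval b - p.eval a := by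
  rw [← integral_Ioc_eq_integral_Ioo, ← intervalIntegral.integral_of_le hab]
  exact intervalIntegral.integral_eq_sub_of_hasDerivAt (fun t _ => p.hasDerivAt t)
    ((derivative p).continuous.intervalIntegrable _ _)

theorem natDegree_X_sub_C_mul_derivative_sub_le {p : ℝ[X]} {k : ℕ} (hp : p.natDegree ≤ k + 1)
    (a : ℝ) : ((X - C a) * derivative p - C ((k + 1 : ℕ) : ℝ) * p).natDegree ≤ k := by
  refine natDegree_le_iff_coeff_eq_zero.2 fun N hN => ?_
  obtain ⟨n, rfl⟩ : ∃ n, N = n + 1 := ⟨N - 1, by omega⟩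
  rw [coeff_sub, mul_comm (X - C a), coeff_mul_X_sub_C, coeff_derivative, coeff_derivative,
    coeff_C_mul, coeff_eq_zero_of_natDegree_lt (show p.natDegree < n + 1 + 1 by omega)]
  rcases (show n = k ∨ k < n by omega) with rfl | hn
  · push_cast; ring
  · rw [coeff_eq_zero_of_natDegree_lt (show p.natDegree < n + 1 by omega)]; ring

section Orthogonal

variable {H : Type*} [NormedAddCommGroup H] [InnerProductSpace ℝ H] [CompleteSpace H]
  {a b : ℝ} {k : ℕ} {L : ℝ[X]}

theorem integral_eval_smul_eq_zero_of_isPolyDeg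
    (hL : ∀ j < k + 1, ∫ t in Ioo a b, L.eval t * t ^ j = 0) {u : ℝ → H}
    (hu : IsPolyDeg k u) :
    ∫ t in Ioo a b, L.eval t • u t = 0 := by
  obtain ⟨c, hc⟩ := hu
  simp_rw [hc, Finset.smul_sum, smul_smul]
  rw [integral_finsetSum _ fun i _ => (by fun_prop : Continuous _).integrableOn_Ioo]
  exact Finset.sum_eq_zero fun i hi => by
    rw [integral_smul_const, hL i (Finset.mem_range.1 hi), zero_smul]

theorem integral_eval_mul_eq_zero_of_natDegree_le
    (hL : ∀ j < k + 1, ∫ t in Ioo a b, L.eval t * t ^ j = 0) {p : ℝ[X]}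
    (hp : p.natDegree ≤ k) :
    ∫ t in Ioo a b, L.eval t * p.eval t = 0 := by
  simpa using integral_eval_smul_eq_zero_of_isPolyDeg hL (isPolyDeg_eval_smul hp (1 : ℝ))

end Orthogonal

section Legendre

variable {a b : ℝ} {k : ℕ} {L : ℝ[X]}

theorem integral_eval_mul_self_of_orthogonal (hab : a ≤ b) (hLdeg : L.natDegree ≤ k + 1)
    (hL : ∀ j < k + 1, ∫ t in Ioo a b, L.eval t * t ^ j = 0) (hLb : L.eval b = 1) :
    ∫ t in Ioo a b, L.eval t * L.eval t = (b - a) / (2 * ((k + 1 : ℕ) : ℝ) + 1) := by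
  set q : ℝ := ((k + 1 : ℕ) : ℝ)
  set E := (X - C a) * derivative L - C q * L
  have hE : ∫ t in Ioo a b, L.eval t * E.eval t = 0 :=
    integral_eval_mul_eq_zero_of_natDegree_le hL
      (natDegree_X_sub_C_mul_derivative_sub_le hLdeg a)
  have hderiv : ∀ t, (derivative ((X - C a) * L ^ 2)).eval t
      = (2 * q + 1) * (L.eval t * L.eval t) + 2 * (L.eval t * E.eval t) := fun t => by
    simp only [E, derivative_mul, derivative_sub, derivative_X, derivative_C, derivative_pow,
      eval_add, eval_sub, eval_mul, eval_pow, eval_C, eval_X, eval_one, eval_zero]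
    ring
  have hftc := integral_Ioo_eval_derivative hab ((X - C a) * L ^ 2)
  have hintegrable : ∀ p : ℝ[X], IntegrableOn (fun t => L.eval t * p.eval t) (Ioo a b) := fun p =>
    (by fun_prop : Continuous _).integrableOn_Ioo
  simp only [hderiv, eval_mul, eval_pow, eval_sub, eval_X, eval_C, hLb, sub_self, zero_mul,
    one_pow, mul_one, sub_zero] at hftc
  rw [integral_add ((hintegrable L).const_mul _) ((hintegrable E).const_mul _), integral_const_mul,
    integral_const_mul, hE, mul_zero, add_zero] at hftc
  have hq : 2 * q + 1 ≠ 0 := by positivity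
  rw [← hftc, mul_div_cancel_left₀ _ hq]

theorem coeff_ne_zero_of_orthogonal (hab : a < b) (hLdeg : L.natDegree ≤ k + 1)
    (hL : ∀ j < k + 1, ∫ t in Ioo a b, L.eval t * t ^ j = 0) (hLb : L.eval b = 1) :
    L.coeff (k + 1) ≠ 0 := by
  intro hcoeff
  have hdeg : L.natDegree ≤ k := natDegree_le_iff_coeff_eq_zero.2 fun N hN => by
    rcases (show N = k + 1 ∨ k + 1 < N by omega) with rfl | hN'
    exacts [hcoeff, coeff_eq_zero_of_natDegree_lt (by omega)]
  have hnorm := integral_eval_mul_self_of_orthogonal hab.le hLdeg hL hLb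
  rw [integral_eval_mul_eq_zero_of_natDegree_le hL hdeg, eq_comm, div_eq_zero_iff] at hnorm
  rcases hnorm with h | h
  · linarith
  · exact absurd h (by positivity)

end Legendre

section Projection

variable {H : Type*} [NormedAddCommGroup H] [InnerProductSpace ℝ H] [CompleteSpace H]
  {a b : ℝ} {k : ℕ} {L : ℝ[X]} {v r : ℝ → H} {w : H}

theorem integral_eval_smul_eq_of_isPolyDeg_sub
    (hL : ∀ j < k + 1, ∫ t in Ioo a b, L.eval t * t ^ j = 0)
    (hvw : IsPolyDeg k (fun t => v t - L.eval t • w)) :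
    ∫ t in Ioo a b, L.eval t • v t = (∫ t in Ioo a b, L.eval t * L.eval t) • w := by
  have hv : Continuous v := hvw.continuous_of_sub_eval_smul
  have h0 := integral_eval_smul_eq_zero_of_isPolyDeg hL hvw
  simp_rw [smul_sub, smul_smul] at h0
  rwa [integral_sub (by fun_prop : Continuous _).integrableOn_Ioo
    (by fun_prop : Continuous _).integrableOn_Ioo, integral_smul_const, sub_eq_zero] at h0

theorem integral_inner_eq_of_isPolyDeg
    (hL : ∀ j < k + 1, ∫ t in Ioo a b, L.eval t * t ^ j = 0)
    (hvw : IsPolyDeg k (fun t => v t - L.eval t • w))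
    (hr : ∀ p : ℝ → H, IsPolyDeg k p → ∫ t in Ioo a b, inner ℝ (r t) (p t) = 0) (μ : ℝ)
    (hrv : IsPolyDeg k (fun t => r t + μ • v t)) :
    ∫ t in Ioo a b, inner ℝ (v t) (r t) =
      -μ * (∫ t in Ioo a b, L.eval t * L.eval t) * ‖w‖ ^ 2 := by
  have hv : Continuous v := hvw.continuous_of_sub_eval_smul
  have hrc : Continuous r :=
    (hrv.continuous.sub (hv.const_smul μ)).congr fun t => add_sub_cancel_right _ _
  have hLr : ∫ t in Ioo a b, L.eval t • r t = -μ • ∫ t in Ioo a b, L.eval t • v t := by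
    have h0 := integral_eval_smul_eq_zero_of_isPolyDeg hL hrv
    simp_rw [smul_add, smul_comm (L.eval _) μ] at h0
    rwa [integral_add (by fun_prop : Continuous _).integrableOn_Ioo
      (by fun_prop : Continuous _).integrableOn_Ioo, integral_smul, add_eq_zero_iff_eq_neg,
      ← neg_smul] at h0
  calc ∫ t in Ioo a b, inner ℝ (v t) (r t)
      = ∫ t in Ioo a b, (inner ℝ w (L.eval t • r t) + inner ℝ (r t) (v t - L.eval t • w)) := by
        congr 1 with t
        rw [inner_smul_right, inner_sub_right, inner_smul_right, real_inner_comm w,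
          real_inner_comm (v t)]
        ring
    _ = inner ℝ w (∫ t in Ioo a b, L.eval t • r t) := by
        rw [integral_add (by fun_prop : Continuous _).integrableOn_Ioo
          (by fun_prop : Continuous _).integrableOn_Ioo, hr _ hvw, add_zero,
          integral_inner (by fun_prop : Continuous _).integrableOn_Ioo]
    _ = -μ * (∫ t in Ioo a b, L.eval t * L.eval t) * ‖w‖ ^ 2 := by
        rw [hLr, integral_eval_smul_eq_of_isPolyDeg_sub hL hvw, inner_smul_right,
          inner_smul_right, real_inner_self_eq_norm_sq]
        ring

end Projection

/-- If `L` is the shifted Legendre polynomial of degree `q ≥ 1` on `(a, b)`,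
`φ(t) = θ − λ(t − a)` with `λ > 0`, `v` is an `H`-valued polynomial of degree at most `q`
with coefficientwise derivative `v'`, and `g` is an `L²(a,b)`-orthogonal projection of
`t ↦ φ(t) v'(t)` onto `H`-valued polynomials of degree at most `q − 1`, then
`∫_a^b ⟨v(t), φ(t)v'(t) − g(t)⟩ dt = −(λ q (2q+1)/τ) ‖∫_a^b L(t) v(t) dt‖²`; in particular
this integral is nonpositive. -/
theorem weighted_projection_inner_integral {H : Type*} [NormedAddCommGroup H]
    [InnerProductSpace ℝ H] [CompleteSpace H]
    (q : ℕ) (hq : 1 ≤ q) (a b : ℝ) (hab : a < b)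
    (τ lam θ : ℝ) (hτ : τ = b - a) (hlam : 0 < lam)
    (φ : ℝ → ℝ) (hφ : ∀ t : ℝ, φ t = θ - lam * (t - a))
    (L : Polynomial ℝ) (hLdeg : L.natDegree ≤ q)
    (hLorth : ∀ j : ℕ, j < q → ∫ t in Set.Ioo a b, L.eval t * t ^ j = 0)
    (hLb : L.eval b = 1)
    (v v' : ℝ → H)
    (hvv' : ∃ c : ℕ → H,
      (∀ t : ℝ, v t = ∑ i ∈ Finset.range (q + 1), t ^ i • c i) ∧
      (∀ t : ℝ, v' t = ∑ i ∈ Finset.range (q + 1), ((i : ℝ) * t ^ (i - 1)) • c i))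
    (g : ℝ → H) (hg : IsL2ProjOn a b (q - 1) (fun t => φ t • v' t) g) :
    (∫ t in Set.Ioo a b, (inner ℝ (v t) (φ t • v' t - g t) : ℝ)) =
      -(lam * (q : ℝ) * (2 * (q : ℝ) + 1) / τ) *
        ‖∫ t in Set.Ioo a b, L.eval t • v t‖ ^ 2 ∧
    (∫ t in Set.Ioo a b, (inner ℝ (v t) (φ t • v' t - g t) : ℝ)) ≤ 0 := by
  obtain ⟨k, rfl⟩ : ∃ k, q = k + 1 := ⟨q - 1, by omega⟩
  obtain ⟨c, hv, hv'⟩ := hvv'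
  obtain ⟨hgdeg, hgorth⟩ := hg
  rw [Nat.add_sub_cancel] at hgdeg hgorth
  have hτpos : 0 < τ := by rw [hτ]; linarith
  have hN := integral_eval_mul_self_of_orthogonal hab.le hLdeg hLorth hLb
  have hℓ := coeff_ne_zero_of_orthogonal hab hLdeg hLorth hLb
  obtain ⟨w, hvw⟩ := IsPolyDeg.exists_sub_eval_smul ⟨c, hv⟩ hLdeg hℓ
  -- `φ v' - g + λ q v = (θ + λ a) v' - λ (t v' - q v) - g`
  have hrv : IsPolyDeg k (fun t => (φ t • v' t - g t) + (lam * ((k + 1 : ℕ) : ℝ)) • v t) := by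
    convert (((isPolyDeg_of_eq_sum_derivative hv').const_smul (θ + lam * a)).sub
      ((isPolyDeg_smul_derivative_sub_smul hv hv').const_smul lam)).sub hgdeg using 1
    funext t
    simp only [hφ, Pi.sub_apply, Pi.smul_apply]
    module
  have hI := integral_inner_eq_of_isPolyDeg hLorth hvw hgorth _ hrv
  have hmain : ∫ t in Ioo a b, inner ℝ (v t) (φ t • v' t - g t) =
      -(lam * ((k + 1 : ℕ) : ℝ) * (2 * ((k + 1 : ℕ) : ℝ) + 1) / τ) *
        ‖∫ t in Ioo a b, L.eval t • v t‖ ^ 2 := by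
    have hτ0 : τ ≠ 0 := hτpos.ne'
    rw [hI, integral_eval_smul_eq_of_isPolyDeg_sub hLorth hvw, norm_smul, hN,
      Real.norm_eq_abs, mul_pow, sq_abs, ← hτ]
    field_simp
  refine ⟨hmain, hmain ▸ mul_nonpos_of_nonpos_of_nonneg (neg_nonpos.2 ?_) (sq_nonneg _)⟩
  positivity
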